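/- For every real θ with 1/3 < θ ≤ 1, there exists a weighted digraph D on a finite vertex set with w(D) > 0 such that θ(D) = θ and mac(D) = θ·w(D). -/

import Mathlib

open scoped BigOperators Classical

noncomputable section

namespace PaperStmt

variable {V : Type*} [Fintype V]

/-- Total weight of a weighted digraph given by `w : V → V → ℝ`. -/
def totalWeight (w : V → V → ℝ) : ℝ := ∑ u, ∑ v, w u v

/-- Weight of the dicut `(X, Xᶜ)`. -/
def cutWeight (w : V → V → ℝ) (X : Finset V) : ℝ := ∑ x ∈ X, ∑ y ∈ Xᶜ, w x y

/-- Maximum weight of a directed cut. -/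
def mac (w : V → V → ℝ) : ℝ :=
  Finset.univ.sup' ⟨∅, Finset.mem_univ ∅⟩ (fun X : Finset V => cutWeight w X)

/-- `r(v) = w⁺(v) - w⁻(v)`. -/
def rv (w : V → V → ℝ) (v : V) : ℝ := (∑ u, w v u) - (∑ u, w u v)

/-- `r⁺(D) = ∑_{v : r(v) > 0} r(v)`. -/
def rPlus (w : V → V → ℝ) : ℝ :=
  ∑ v ∈ Finset.univ.filter (fun v => 0 < rv w v), rv w v

/-! ### Auxiliary construction -/

/-- Vertices `< k` form the source class. -/
private def Plo (k : ℕ) (v : Fin (k + k)) : Prop := (v : ℕ) < k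

private instance (k : ℕ) : DecidablePred (Plo k) := fun v => Nat.decLt _ _

/-- Off-diagonal weight pattern: inside each class every ordered pair gets
weight `c`; every pair `X → Y` gets weight `1`; pairs `Y → X` get `0`. -/
private def Bfun (k : ℕ) (c : ℝ) : Fin (k + k) → Fin (k + k) → ℝ :=
  fun u v => if Plo k u then (if Plo k v then c else 1)
             else (if Plo k v then 0 else c)

/-- The actual weight function: `Bfun` with zero diagonal. -/
private def Wfun (k : ℕ) (c : ℝ) : Fin (k + k) → Fin (k + k) → ℝ :=
  fun u v => if u = v then 0 else Bfun k c u v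

private lemma Bfun_diag (k : ℕ) (c : ℝ) (u : Fin (k + k)) : Bfun k c u u = c := by
  unfold Bfun; by_cases h : Plo k u <;> simp [h]

private lemma Wfun_eq (k : ℕ) (c : ℝ) (u v : Fin (k + k)) :
    Wfun k c u v = Bfun k c u v - (if u = v then c else 0) := by
  unfold Wfun
  by_cases h : u = v
  · subst h; simp [Bfun_diag]
  · simp [h]

private lemma card_filter_lt (k : ℕ) :
    ((Finset.univ : Finset (Fin (k + k))).filter (Plo k)).card = k := by
  apply Finset.card_eq_of_bijective (fun i hi => (⟨i, by omega⟩ : Fin (k + k)))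
  · intro a ha
    have h : Plo k a := (Finset.mem_filter.mp ha).2
    exact ⟨(a : ℕ), h, by simp [Fin.ext_iff]⟩
  · intro i hi
    exact Finset.mem_filter.mpr ⟨Finset.mem_univ _, hi⟩
  · intro i j hi hj h
    simpa [Fin.ext_iff] using h

private lemma card_filter_not_lt (k : ℕ) :
    ((Finset.univ : Finset (Fin (k + k))).filter (fun v => ¬ Plo k v)).card = k := by
  have h := Finset.card_filter_add_card_filter_not
    (s := (Finset.univ : Finset (Fin (k + k)))) (Plo k)
  rw [card_filter_lt] at h
  have hu : (Finset.univ : Finset (Fin (k + k))).card = k + k := by simp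
  omega

private lemma cutWeight_eq {k : ℕ} (w : Fin (k + k) → Fin (k + k) → ℝ)
    (S : Finset (Fin (k + k))) :
    cutWeight w S = ∑ x ∈ S, ∑ y ∈ Sᶜ, w x y := by
  unfold cutWeight
  apply Finset.sum_congr rfl
  intro x _
  apply Finset.sum_congr _ (fun _ _ => rfl)
  ext y
  simp [Finset.mem_compl]

private lemma filter_split_card (k : ℕ) (S : Finset (Fin (k + k)))
    (p : Fin (k + k) → Prop) [DecidablePred p] :
    (S.filter p).card + ((Sᶜ).filter p).card
      = ((Finset.univ : Finset (Fin (k + k))).filter p).card := by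
  rw [← Finset.card_union_of_disjoint
      (Finset.disjoint_filter_filter (show Disjoint S Sᶜ from disjoint_compl_right))]
  congr 1
  rw [← Finset.filter_union, Finset.union_compl]

/-- Splitting a sum over a subset of `Fin (k+k)` into the two classes, when the
summand is constant on each class. -/
private lemma sum_split {k : ℕ} (S : Finset (Fin (k + k))) (f : Fin (k + k) → ℝ)
    (cP cN : ℝ)
    (hP : ∀ v ∈ S, Plo k v → f v = cP)
    (hN : ∀ v ∈ S, ¬ Plo k v → f v = cN) :
    ∑ v ∈ S, f v
      = ((S.filter (Plo k)).card : ℝ) * cP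
        + ((S.filter (fun v => ¬ Plo k v)).card : ℝ) * cN := by
  rw [← Finset.sum_filter_add_sum_filter_not S (Plo k) f]
  congr 1
  · rw [Finset.sum_congr rfl (fun v hv => hP v (Finset.mem_filter.mp hv).1
      (Finset.mem_filter.mp hv).2), Finset.sum_const, nsmul_eq_mul]
  · rw [Finset.sum_congr rfl (fun v hv => hN v (Finset.mem_filter.mp hv).1
      (Finset.mem_filter.mp hv).2), Finset.sum_const, nsmul_eq_mul]

private lemma sum_B_row (k : ℕ) (c : ℝ) (x : Fin (k + k)) :
    ∑ v, Bfun k c x v = if Plo k x then (k : ℝ) * c + k else (k : ℝ) * c := by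
  by_cases hx : Plo k x
  · rw [sum_split Finset.univ (fun v => Bfun k c x v) c 1
      (fun v _ hv => by simp [Bfun, hx, hv])
      (fun v _ hv => by simp [Bfun, hx, hv]),
      card_filter_lt, card_filter_not_lt]
    simp [hx]
  · rw [sum_split Finset.univ (fun v => Bfun k c x v) 0 c
      (fun v _ hv => by simp [Bfun, hx, hv])
      (fun v _ hv => by simp [Bfun, hx, hv]),
      card_filter_lt, card_filter_not_lt]
    simp [hx]

private lemma sum_B_col (k : ℕ) (c : ℝ) (x : Fin (k + k)) :
    ∑ u, Bfun k c u x = if Plo k x then (k : ℝ) * c else (k : ℝ) + k * c := by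
  by_cases hx : Plo k x
  · rw [sum_split Finset.univ (fun u => Bfun k c u x) c 0
      (fun v _ hv => by simp [Bfun, hx, hv])
      (fun v _ hv => by simp [Bfun, hx, hv]),
      card_filter_lt, card_filter_not_lt]
    simp [hx]
  · rw [sum_split Finset.univ (fun u => Bfun k c u x) 1 c
      (fun v _ hv => by simp [Bfun, hx, hv])
      (fun v _ hv => by simp [Bfun, hx, hv]),
      card_filter_lt, card_filter_not_lt]
    simp [hx]

private lemma sum_W_row (k : ℕ) (c : ℝ) (x : Fin (k + k)) :
    ∑ v, Wfun k c x v = (∑ v, Bfun k c x v) - c := by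
  simp only [Wfun_eq, Finset.sum_sub_distrib]
  rw [Finset.sum_ite_eq Finset.univ x (fun _ => c)]
  simp

private lemma sum_W_col (k : ℕ) (c : ℝ) (x : Fin (k + k)) :
    ∑ u, Wfun k c u x = (∑ u, Bfun k c u x) - c := by
  simp only [Wfun_eq, Finset.sum_sub_distrib]
  rw [Finset.sum_ite_eq' Finset.univ x (fun _ => c)]
  simp

private lemma rv_W (k : ℕ) (c : ℝ) (x : Fin (k + k)) :
    rv (Wfun k c) x = if Plo k x then (k : ℝ) else -(k : ℝ) := by
  unfold rv
  rw [sum_W_row, sum_W_col, sum_B_row, sum_B_col]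
  by_cases hx : Plo k x
  · simp only [if_pos hx]; ring
  · simp only [if_neg hx]; ring

private lemma total_W (k : ℕ) (c : ℝ) :
    totalWeight (Wfun k c) = (k : ℝ) ^ 2 + 2 * k * ((k : ℝ) - 1) * c := by
  unfold totalWeight
  rw [sum_split Finset.univ (fun x => ∑ v, Wfun k c x v)
      ((k : ℝ) * c + k - c) ((k : ℝ) * c - c)
      (fun x _ hx => by rw [sum_W_row, sum_B_row]; simp [hx])
      (fun x _ hx => by rw [sum_W_row, sum_B_row]; simp [hx]),
    card_filter_lt, card_filter_not_lt]
  ring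

private lemma rPlus_W (k : ℕ) (hk : 1 ≤ k) (c : ℝ) :
    rPlus (Wfun k c) = (k : ℝ) ^ 2 := by
  unfold rPlus
  have hkR : (0 : ℝ) < k := by exact_mod_cast hk
  have hfil : (Finset.univ.filter (fun v => 0 < rv (Wfun k c) v))
      = (Finset.univ.filter (Plo k)) := by
    apply Finset.filter_congr
    intro v _
    rw [rv_W]
    by_cases hv : Plo k v <;> simp [hv, hkR] <;> linarith
  have hval : ∀ v ∈ Finset.univ.filter (Plo k), rv (Wfun k c) v = (k : ℝ) := by
    intro v hv
    rw [rv_W, if_pos (Finset.mem_filter.mp hv).2]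
  rw [hfil, Finset.sum_congr rfl hval, Finset.sum_const, nsmul_eq_mul, card_filter_lt]
  ring

/-- The main cut-counting formula. -/
private lemma cut_formula (k : ℕ) (c : ℝ) (S : Finset (Fin (k + k))) :
    cutWeight (Wfun k c) S
      = c * (((S.filter (Plo k)).card : ℝ)
              * ((k : ℝ) - ((S.filter (Plo k)).card : ℝ))
            + ((S.filter (fun v => ¬ Plo k v)).card : ℝ)
              * ((k : ℝ) - ((S.filter (fun v => ¬ Plo k v)).card : ℝ)))
        + ((S.filter (Plo k)).card : ℝ)
            * ((k : ℝ) - ((S.filter (fun v => ¬ Plo k v)).card : ℝ)) := by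
  have hak : (S.filter (Plo k)).card ≤ k := by
    have h1 := Finset.card_le_card
      (Finset.filter_subset_filter (Plo k) (Finset.subset_univ S))
    rwa [card_filter_lt] at h1
  have hbk : (S.filter (fun v => ¬ Plo k v)).card ≤ k := by
    have h1 := Finset.card_le_card
      (Finset.filter_subset_filter (fun v => ¬ Plo k v) (Finset.subset_univ S))
    rwa [card_filter_not_lt] at h1
  have hcP : ((Sᶜ).filter (Plo k)).card = k - (S.filter (Plo k)).card := by
    have h1 := filter_split_card k S (Plo k)
    rw [card_filter_lt] at h1; omega
  have hcN : ((Sᶜ).filter (fun v => ¬ Plo k v)).card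
      = k - (S.filter (fun v => ¬ Plo k v)).card := by
    have h1 := filter_split_card k S (fun v => ¬ Plo k v)
    rw [card_filter_not_lt] at h1; omega
  have hcPR : (((Sᶜ).filter (Plo k)).card : ℝ)
      = (k : ℝ) - ((S.filter (Plo k)).card : ℝ) := by
    rw [hcP]; exact Nat.cast_sub hak
  have hcNR : (((Sᶜ).filter (fun v => ¬ Plo k v)).card : ℝ)
      = (k : ℝ) - ((S.filter (fun v => ¬ Plo k v)).card : ℝ) := by
    rw [hcN]; exact Nat.cast_sub hbk
  rw [cutWeight_eq]
  have hinner : ∀ x ∈ S, (Plo k x → ∑ y ∈ Sᶜ, Wfun k c x y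
        = ((k : ℝ) - ((S.filter (Plo k)).card : ℝ)) * c
          + ((k : ℝ) - ((S.filter (fun v => ¬ Plo k v)).card : ℝ)))
      ∧ (¬ Plo k x → ∑ y ∈ Sᶜ, Wfun k c x y
        = ((k : ℝ) - ((S.filter (fun v => ¬ Plo k v)).card : ℝ)) * c) := by
    intro x hxS
    have hxy : ∀ y ∈ Sᶜ, x ≠ y := by
      intro y hy h
      exact (Finset.mem_compl.mp hy) (h ▸ hxS)
    constructor
    · intro hx
      rw [sum_split Sᶜ (fun y => Wfun k c x y) c 1
        (fun y hy hv => by simp [Wfun, hxy y hy, Bfun, hx, hv])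
        (fun y hy hv => by simp [Wfun, hxy y hy, Bfun, hx, hv]),
        hcPR, hcNR]
      ring
    · intro hx
      rw [sum_split Sᶜ (fun y => Wfun k c x y) 0 c
        (fun y hy hv => by simp [Wfun, hxy y hy, Bfun, hx, hv])
        (fun y hy hv => by simp [Wfun, hxy y hy, Bfun, hx, hv]),
        hcPR, hcNR]
      ring
  rw [sum_split S (fun x => ∑ y ∈ Sᶜ, Wfun k c x y)
    (((k : ℝ) - ((S.filter (Plo k)).card : ℝ)) * c
      + ((k : ℝ) - ((S.filter (fun v => ¬ Plo k v)).card : ℝ)))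
    (((k : ℝ) - ((S.filter (fun v => ¬ Plo k v)).card : ℝ)) * c)
    (fun x hx hv => (hinner x hx).1 hv)
    (fun x hx hv => (hinner x hx).2 hv)]
  ring

/-- The key integer inequality (uses integrality of `a`, `b`). -/
private lemma key_int (k a b : ℤ) (hk : 2 ≤ k) (ha0 : 0 ≤ a) (hak : a ≤ k)
    (hb0 : 0 ≤ b) (hbk : b ≤ k) :
    2 * (k - 1) * (a * (k - b)) + (2 * k - 1) * (a * (k - a) + b * (k - b))
      ≤ 2 * k ^ 2 * (k - 1) := by
  rcases eq_or_ne (a + b - k) 0 with hs | hs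
  · obtain rfl : a = k - b := by omega
    have h1 : 1 ≤ (2 * b - 1) ^ 2 := by
      rcases (by omega : b ≤ 0 ∨ 1 ≤ b) with h | h <;> nlinarith
    nlinarith [mul_nonneg (by linarith : (0 : ℤ) ≤ k)
      (by linarith : (0 : ℤ) ≤ (2 * b - 1) ^ 2 - 1)]
  · have hs2 : 1 ≤ (a + b - k) ^ 2 := by
      rcases (by omega : a + b - k ≤ -1 ∨ 1 ≤ a + b - k) with h | h <;> nlinarith
    nlinarith [mul_nonneg (by linarith : (0 : ℤ) ≤ k)
        (sq_nonneg (2 * b - (a + b - k) - 1)),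
      mul_nonneg (by linarith : (0 : ℤ) ≤ 3 * k - 2)
        (by linarith : (0 : ℤ) ≤ (a + b - k) ^ 2 - 1)]

private lemma key_real (k a b : ℕ) (hk : 2 ≤ k) (ha : a ≤ k) (hb : b ≤ k) :
    2 * ((k : ℝ) - 1) * ((a : ℝ) * ((k : ℝ) - b))
      + (2 * (k : ℝ) - 1) * ((a : ℝ) * ((k : ℝ) - a) + (b : ℝ) * ((k : ℝ) - b))
      ≤ 2 * (k : ℝ) ^ 2 * ((k : ℝ) - 1) := by
  have h := key_int (k : ℤ) (a : ℤ) (b : ℤ) (by exact_mod_cast hk)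
    (by positivity) (by exact_mod_cast ha) (by positivity) (by exact_mod_cast hb)
  exact_mod_cast h

/-- Every dicut of the construction has weight at most `k²`. -/
private lemma cut_le (k : ℕ) (hk : 2 ≤ k) (c : ℝ) (hc0 : 0 ≤ c)
    (hc1 : 2 * ((k : ℝ) - 1) * c ≤ 2 * (k : ℝ) - 1) (S : Finset (Fin (k + k))) :
    cutWeight (Wfun k c) S ≤ (k : ℝ) ^ 2 := by
  rw [cut_formula]
  have hak : (S.filter (Plo k)).card ≤ k := by
    have h1 := Finset.card_le_card
      (Finset.filter_subset_filter (Plo k) (Finset.subset_univ S))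
    rwa [card_filter_lt] at h1
  have hbk : (S.filter (fun v => ¬ Plo k v)).card ≤ k := by
    have h1 := Finset.card_le_card
      (Finset.filter_subset_filter (fun v => ¬ Plo k v) (Finset.subset_univ S))
    rwa [card_filter_not_lt] at h1
  set A : ℝ := ((S.filter (Plo k)).card : ℝ) with hA
  set B : ℝ := ((S.filter (fun v => ¬ Plo k v)).card : ℝ) with hB
  have hakR : A ≤ (k : ℝ) := by rw [hA]; exact_mod_cast hak
  have hbkR : B ≤ (k : ℝ) := by rw [hB]; exact_mod_cast hbk
  have ha0 : (0 : ℝ) ≤ A := by rw [hA]; positivity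
  have hb0 : (0 : ℝ) ≤ B := by rw [hB]; positivity
  have hkR : (2 : ℝ) ≤ k := by exact_mod_cast hk
  have hbr : (0 : ℝ) ≤ A * ((k : ℝ) - A) + B * ((k : ℝ) - B) := by
    have h1 := mul_nonneg ha0 (by linarith : (0 : ℝ) ≤ (k : ℝ) - A)
    have h2 := mul_nonneg hb0 (by linarith : (0 : ℝ) ≤ (k : ℝ) - B)
    linarith
  have hkey : 2 * ((k : ℝ) - 1) * (A * ((k : ℝ) - B))
      + (2 * (k : ℝ) - 1) * (A * ((k : ℝ) - A) + B * ((k : ℝ) - B))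
      ≤ 2 * (k : ℝ) ^ 2 * ((k : ℝ) - 1) := by
    rw [hA, hB]
    exact key_real k _ _ hk hak hbk
  have hmul := mul_le_mul_of_nonneg_right hc1 hbr
  have hpos : (0 : ℝ) < 2 * ((k : ℝ) - 1) := by linarith
  have h4 : 2 * ((k : ℝ) - 1)
      * (c * (A * ((k : ℝ) - A) + B * ((k : ℝ) - B)) + A * ((k : ℝ) - B))
      ≤ 2 * ((k : ℝ) - 1) * (k : ℝ) ^ 2 := by nlinarith [hmul, hkey]
  have h5 := le_of_mul_le_mul_left h4 hpos
  linarith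

private lemma cut_X0 (k : ℕ) (c : ℝ) :
    cutWeight (Wfun k c) ((Finset.univ : Finset (Fin (k + k))).filter (Plo k))
      = (k : ℝ) ^ 2 := by
  rw [cut_formula]
  have h1 : ((((Finset.univ : Finset (Fin (k + k))).filter (Plo k)).filter
      (Plo k)).card) = k := by
    rw [Finset.filter_true_of_mem (fun x hx => (Finset.mem_filter.mp hx).2),
      card_filter_lt]
  have h2 : ((((Finset.univ : Finset (Fin (k + k))).filter (Plo k)).filter
      (fun v => ¬ Plo k v)).card) = 0 := by
    rw [Finset.card_eq_zero]
    ext v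
    simp only [Finset.mem_filter, Finset.notMem_empty, iff_false]
    tauto
  rw [h1, h2]
  push_cast
  ring

private lemma mac_W (k : ℕ) (hk : 2 ≤ k) (c : ℝ) (hc0 : 0 ≤ c)
    (hc1 : 2 * ((k : ℝ) - 1) * c ≤ 2 * (k : ℝ) - 1) :
    mac (Wfun k c) = (k : ℝ) ^ 2 := by
  apply le_antisymm
  · exact Finset.sup'_le _ _ (fun S _ => cut_le k hk c hc0 hc1 S)
  · have h := Finset.le_sup' (fun X : Finset (Fin (k + k)) => cutWeight (Wfun k c) X)
      (Finset.mem_univ ((Finset.univ : Finset (Fin (k + k))).filter (Plo k)))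
    rw [cut_X0 k c] at h
    exact h

theorem tight_construction_large_theta :
    ∀ θ : ℝ, 1 / 3 < θ → θ ≤ 1 →
      ∃ (n : ℕ) (w : Fin n → Fin n → ℝ),
        (∀ u v, 0 ≤ w u v) ∧ (∀ v, w v v = 0) ∧ 0 < totalWeight w ∧
        rPlus w / totalWeight w = θ ∧
        mac w = θ * totalWeight w := by
  intro θ hθ1 hθ2
  have hθ0 : 0 < θ := by linarith
  have h3θ : 0 < 3 * θ - 1 := by linarith
  set k : ℕ := max 2 ⌈θ / (3 * θ - 1)⌉₊ with hkdef
  have hk2 : 2 ≤ k := le_max_left _ _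
  set K : ℝ := (k : ℝ) with hKdef
  have hK2 : (2 : ℝ) ≤ K := by rw [hKdef]; exact_mod_cast hk2
  have hK0 : (0 : ℝ) < K := by linarith
  have hK1 : (0 : ℝ) < K - 1 := by linarith
  have hKθ : θ ≤ K * (3 * θ - 1) := by
    have h1 : θ / (3 * θ - 1) ≤ (⌈θ / (3 * θ - 1)⌉₊ : ℝ) := Nat.le_ceil _
    have h2 : ((⌈θ / (3 * θ - 1)⌉₊ : ℕ) : ℝ) ≤ K := by
      exact_mod_cast Nat.cast_le.mpr (le_max_right 2 ⌈θ / (3 * θ - 1)⌉₊)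
    have h3 : θ / (3 * θ - 1) ≤ K := le_trans h1 h2
    calc θ = (θ / (3 * θ - 1)) * (3 * θ - 1) := by rw [div_mul_cancel₀ _ (ne_of_gt h3θ)]
    _ ≤ K * (3 * θ - 1) := mul_le_mul_of_nonneg_right h3 (le_of_lt h3θ)
  set c : ℝ := K * (1 - θ) / (2 * θ * (K - 1)) with hcdef
  have hc0 : 0 ≤ c := by
    apply div_nonneg
    · nlinarith
    · nlinarith
  have h2c : 2 * (K - 1) * c = K * (1 - θ) / θ := by
    rw [hcdef]
    field_simp
  have hc1 : 2 * (K - 1) * c ≤ 2 * K - 1 := by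
    rw [h2c, div_le_iff₀ hθ0]
    nlinarith
  have htot : (k : ℝ) ^ 2 + 2 * k * ((k : ℝ) - 1) * c = K ^ 2 / θ := by
    rw [show 2 * (k : ℝ) * ((k : ℝ) - 1) * c = K * (2 * (K - 1) * c) by
      rw [hKdef]; ring, h2c]
    field_simp
    ring
  refine ⟨k + k, Wfun k c, ?_, ?_, ?_, ?_, ?_⟩
  · intro u v
    unfold Wfun Bfun
    split_ifs <;> first | exact hc0 | norm_num
  · intro v
    simp [Wfun]
  · rw [total_W, htot]
    positivity
  · rw [total_W, rPlus_W k (by omega) c, htot, hKdef]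
    rw [div_div_eq_mul_div]
    field_simp
  · rw [total_W, mac_W k hk2 c hc0 hc1, htot, hKdef]
    field_simp

end PaperStmt
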